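/- arXiv:2306.12282 — 5 statements merged into one kernel-verified Lean document; each statement's English description precedes it below -/
import Mathlib

section
/- Let m > 0 and 0 < r_ℓ < r_h. Define CP_u(p;(x,y)) = (max{p, min{y, (m-x)^+}}·r_h + min{x, m-p}·r_ℓ) / (min{y,m}·r_h + min{x, (m-y)^+}·r_ℓ). For any x ≥ 0, y ≥ 0, and protection levels p₁, p₂ with 0 ≤ p₁ ≤ p₂ ≤ min{y,m}, one has CP_u(p₂;(x,y)) ≥ CP_u(p₁;(x,y)). -/
/-! The denominator of `CPu` does not depend on `p` and is nonnegative, so it suffices that the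
numerator is monotone in `p`. Raising `p` can only lower the low-fare term `min x (m - p)`, and
only once `m - p < x`; there `p` already dominates `min y (m - x)⁺`, so the high-fare term
`max p _` rises by at least as much, and `r_ℓ ≤ r_h` makes the exchange profitable. -/

noncomputable def CPu (m rh rl p x y : ℝ) : ℝ :=
  (max p (min y (max (m - x) 0)) * rh + min x (m - p) * rl) /
    (min y m * rh + min x (max (m - y) 0) * rl)

lemma min_sub_le_max_sub_max {m x A p₁ p₂ : ℝ} (hp₁ : 0 ≤ p₁) (h12 : p₁ ≤ p₂)
    (hA : A ≤ max (m - x) 0) :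
    min x (m - p₁) - min x (m - p₂) ≤ max p₂ A - max p₁ A := by
  rcases le_total x (m - p₂) with hx | hx
  · rw [min_eq_left hx, min_eq_left (hx.trans (by linarith)), sub_self, sub_nonneg]
    exact max_le_max_right A h12
  · have hA₂ : A ≤ p₂ := hA.trans (max_le (by linarith) (hp₁.trans h12))
    rw [min_eq_right hx, max_eq_left hA₂]
    rcases max_cases p₁ A with ⟨h, _⟩ | ⟨h, _⟩ <;>
      rcases max_cases (m - x) 0 with ⟨h', _⟩ | ⟨h', _⟩ <;>
      rcases min_cases x (m - p₁) with ⟨h'', _⟩ | ⟨h'', _⟩ <;> linarith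

lemma max_mul_add_min_mul_mono {m x A rh rl p₁ p₂ : ℝ} (hrh : 0 ≤ rh) (hlh : rl ≤ rh)
    (hp₁ : 0 ≤ p₁) (h12 : p₁ ≤ p₂) (hA : A ≤ max (m - x) 0) :
    max p₁ A * rh + min x (m - p₁) * rl ≤ max p₂ A * rh + min x (m - p₂) * rl := by
  have hdrop : 0 ≤ min x (m - p₁) - min x (m - p₂) :=
    sub_nonneg.2 (min_le_min_left x (by linarith))
  have hgain := min_sub_le_max_sub_max hp₁ h12 hA
  linarith [mul_le_mul_of_nonneg_left hgain hrh, mul_le_mul_of_nonneg_right hlh hdrop]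

theorem stmt_2_general (m rh rl x y p₁ p₂ : ℝ) (hrl : 0 < rl) (hlh : rl < rh)
    (hx : 0 ≤ x) (h1 : 0 ≤ p₁) (h12 : p₁ ≤ p₂) (h2 : p₂ ≤ min y m) :
    CPu m rh rl p₁ x y ≤ CPu m rh rl p₂ x y := by
  have hrh : 0 ≤ rh := (hrl.trans hlh).le
  have hden : 0 ≤ min y m * rh + min x (max (m - y) 0) * rl := by
    have hym : 0 ≤ min y m := (h1.trans h12).trans h2
    have hxy : 0 ≤ min x (max (m - y) 0) := le_min hx (le_max_right _ _)
    exact add_nonneg (mul_nonneg hym hrh) (mul_nonneg hxy hrl.le)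
  exact div_le_div_of_nonneg_right
    (max_mul_add_min_mul_mono hrh hlh.le h1 h12 (min_le_right _ _)) hden

theorem stmt_2 (m rh rl x y p₁ p₂ : ℝ) (hm : 0 < m) (hrl : 0 < rl) (hlh : rl < rh)
    (hx : 0 ≤ x) (hy : 0 ≤ y) (h1 : 0 ≤ p₁) (h12 : p₁ ≤ p₂) (h2 : p₂ ≤ min y m) :
    CPu m rh rl p₁ x y ≤ CPu m rh rl p₂ x y :=
  stmt_2_general m rh rl x y p₁ p₂ hrl hlh hx h1 h12 h2
end

section
/- Let m > 0, 0 < r_ℓ < r_h, and x ≥ 0. Suppose y₁, y₂ ≥ 0 satisfy min{m,y₁} ≤ min{m,y₂}, and p is a protection level with min{m,y₂} ≤ p ≤ m. Then CP_o(p;(x,y₂)) ≥ CP_o(p;(x,y₁)), where CP_o(p;(x,y)) = (min{y,m}·r_h + min{x, (m-p)^+}·r_ℓ) / (min{y,m}·r_h + min{x, (m-y)^+}·r_ℓ). -/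
/-!
Write `t = min y m`, so that `(m - y)⁺ = m - t` and
`CP_o = (t r_h + b r_ℓ) / (t r_h + min x (m - t) r_ℓ)` with `b = min x (m - p)⁺` independent of `y`.
Passing from `t₁` to `t₂ ≥ t₁` (both at most `p`) first shrinks the denominator term
`min x (m - t)` without going below `b`, and then adds the same amount `(t₂ - t₁) r_h` to
numerator and denominator of a fraction at most one; neither step decreases the ratio.
-/

noncomputable def CPo (m rh rl p x y : ℝ) : ℝ :=
  (min y m * rh + min x (max (m - p) 0) * rl) /
    (min y m * rh + min x (max (m - y) 0) * rl)

theorem max_sub_zero_eq_sub_min (m y : ℝ) : max (m - y) 0 = m - min y m := by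
  rw [← max_sub_sub_left, sub_self]

theorem CPo_eq (m rh rl p x y : ℝ) :
    CPo m rh rl p x y =
      (min y m * rh + min x (m - min p m) * rl) /
        (min y m * rh + min x (m - min y m) * rl) := by
  simp only [CPo, max_sub_zero_eq_sub_min]

theorem add_div_add_le_add_div_add_of_le {a a' b c : ℝ} (ha : 0 ≤ a) (haa' : a ≤ a')
    (hb : 0 ≤ b) (hbc : b ≤ c) :
    (a + b) / (a + c) ≤ (a' + b) / (a' + c) := by
  rcases (add_nonneg ha (hb.trans hbc)).eq_or_lt with hzero | hpos
  · rw [← hzero, div_zero]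
    exact div_nonneg (by linarith) (by linarith)
  · rw [div_le_div_iff₀ hpos (by linarith)]
    nlinarith [mul_nonneg (sub_nonneg.2 haa') (sub_nonneg.2 hbc)]

theorem add_div_add_le_add_div_add_of_le_right {a b c c' : ℝ} (ha : 0 ≤ a) (hb : 0 ≤ b)
    (hbc' : b ≤ c') (hc'c : c' ≤ c) :
    (a + b) / (a + c) ≤ (a + b) / (a + c') := by
  rcases (add_nonneg ha (hb.trans hbc')).eq_or_lt with hzero | hpos
  · have : a + b = 0 := by linarith
    simp only [this, zero_div, le_refl]
  · exact div_le_div_of_nonneg_left (add_nonneg ha hb) hpos (by linarith)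

theorem stmt_4_general (m rh rl x y₁ y₂ p : ℝ) (hm : 0 < m) (hrl : 0 < rl) (hlh : rl < rh)
    (hx : 0 ≤ x) (hy1 : 0 ≤ y₁) (hyy : min m y₁ ≤ min m y₂)
    (hp : min m y₂ ≤ p) :
    CPo m rh rl p x y₁ ≤ CPo m rh rl p x y₂ := by
  have hrh : 0 ≤ rh := hrl.le.trans hlh.le
  have ht₁ : 0 ≤ min y₁ m := le_min hy1 hm.le
  have ht : min y₁ m ≤ min y₂ m := by simpa only [min_comm] using hyy
  have htp : min y₂ m ≤ min p m := by
    rw [min_comm]; exact le_min hp (min_le_left _ _)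
  have hb : 0 ≤ min x (m - min p m) := le_min hx (sub_nonneg.2 (min_le_right _ _))
  have hbc₂ : min x (m - min p m) ≤ min x (m - min y₂ m) := by gcongr
  have hc₂c₁ : min x (m - min y₂ m) ≤ min x (m - min y₁ m) := by gcongr
  rw [CPo_eq, CPo_eq]
  calc _ ≤ (min y₁ m * rh + min x (m - min p m) * rl) /
          (min y₁ m * rh + min x (m - min y₂ m) * rl) :=
        add_div_add_le_add_div_add_of_le_right (by positivity) (by positivity)
          (by gcongr) (by gcongr)
    _ ≤ _ :=
        add_div_add_le_add_div_add_of_le (by positivity) (by gcongr) (by positivity) (by gcongr)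

theorem stmt_4 (m rh rl x y₁ y₂ p : ℝ) (hm : 0 < m) (hrl : 0 < rl) (hlh : rl < rh)
    (hx : 0 ≤ x) (hy1 : 0 ≤ y₁) (hy2 : 0 ≤ y₂) (hyy : min m y₁ ≤ min m y₂)
    (hp : min m y₂ ≤ p) (hpm : p ≤ m) :
    CPo m rh rl p x y₁ ≤ CPo m rh rl p x y₂ :=
  stmt_4_general m rh rl x y₁ y₂ p hm hrl hlh hx hy1 hyy hp
end

section
/- Let m > 0, 0 < r_ℓ < r_h, and let p : [0,m] → [0,m] be a non-increasing function such that for all x₁ ≤ x₂ in [0,m], p(x₁) - p(x₂) ≤ x₂ - x₁ (slope bounded below by -1). Then x ↦ CP_u(p(x);(x,m)) is non-increasing on [0,m], where CP_u(q;(x,m)) = (max{q, m-x}·r_h + min{x, m-q}·r_ℓ) / (m·r_h). In particular CP_u(p(m);(m,m)) ≤ CP_u(p(x);(x,m)) for all x ∈ [0,m]. -/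
/-- Under-protection compatible ratio at the point (x, m). -/
noncomputable def CPum (m rh rl q x : ℝ) : ℝ :=
  (max q (m - x) * rh + min x (m - q) * rl) / (m * rh)

lemma CPum_eq (m rh rl q x : ℝ) :
    CPum m rh rl q x = (max q (m - x) * (rh - rl) + m * rl) / (m * rh) := by
  unfold CPum
  have h : min x (m - q) = m - max q (m - x) := by
    rcases le_total q (m - x) with h | h
    · rw [max_eq_right h, min_eq_left (by linarith)]; ring
    · rw [max_eq_left h, min_eq_right (by linarith)]
  rw [h]; ring_nf

theorem stmt_8 (m rh rl : ℝ) (p : ℝ → ℝ) (hm : 0 < m) (hrl : 0 < rl) (hlh : rl < rh)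
    (hrange : ∀ x ∈ Set.Icc (0 : ℝ) m, p x ∈ Set.Icc (0 : ℝ) m)
    (hmono : ∀ x₁ ∈ Set.Icc (0 : ℝ) m, ∀ x₂ ∈ Set.Icc (0 : ℝ) m, x₁ ≤ x₂ → p x₂ ≤ p x₁)
    (hslope : ∀ x₁ ∈ Set.Icc (0 : ℝ) m, ∀ x₂ ∈ Set.Icc (0 : ℝ) m, x₁ ≤ x₂ →
      p x₁ - p x₂ ≤ x₂ - x₁) :
    (∀ x₁ ∈ Set.Icc (0 : ℝ) m, ∀ x₂ ∈ Set.Icc (0 : ℝ) m, x₁ ≤ x₂ →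
      CPum m rh rl (p x₂) x₂ ≤ CPum m rh rl (p x₁) x₁) ∧
    (∀ x ∈ Set.Icc (0 : ℝ) m, CPum m rh rl (p m) m ≤ CPum m rh rl (p x) x) := by
  have main : ∀ x₁ ∈ Set.Icc (0 : ℝ) m, ∀ x₂ ∈ Set.Icc (0 : ℝ) m, x₁ ≤ x₂ →
      CPum m rh rl (p x₂) x₂ ≤ CPum m rh rl (p x₁) x₁ := by
    intro x₁ h₁ x₂ h₂ hle
    rw [CPum_eq, CPum_eq]
    have hmax : max (p x₂) (m - x₂) ≤ max (p x₁) (m - x₁) := by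
      apply max_le
      · exact le_max_of_le_left (hmono x₁ h₁ x₂ h₂ hle)
      · exact le_max_of_le_right (by linarith)
    have hpos : 0 < m * rh := mul_pos hm (by linarith)
    gcongr
  refine ⟨main, fun x hx => main x hx m ⟨le_of_lt hm, le_refl m⟩ hx.2⟩
end

section
/- Let m > 0, 0 < r_ℓ < r_h, and let ρ = 1/(2 - r_ℓ/r_h) and p* = m·(1 - r_ℓ/r_h)/(2 - r_ℓ/r_h). Then for every x ∈ (0, m]: (i) CP_o(p*;(x,0)) = min{x, m-p*}/x ≥ ρ, and (ii) CP_u(p*;(x,m)) = (max{p*, m-x}·r_h + min{x, m-p*}·r_ℓ)/(m·r_h) ≥ ρ. -/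
/-!
Write `t = r_ℓ / r_h ∈ (0, 1)` and `ρ = 1 / (2 - t)`, so that `m - p* = m ρ`. Over-protection
accepts `min {x, m ρ} ≥ ρ x` units out of `x ≤ m`. Under-protection earns (in units of `r_h`) at
least `m - (1 - t) x` when `x ≤ m - p*` and at least `p* + t (m - p*)` otherwise; `p*` is exactly
the protection level at which both of these worst cases equal `m ρ`.
-/

theorem le_min_div_self {m ρ x : ℝ} (hx0 : 0 < x) (hxm : x ≤ m) (hρ0 : 0 ≤ ρ) (hρ1 : ρ ≤ 1) :
    ρ ≤ min x (m * ρ) / x := by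
  rw [le_div_iff₀ hx0]
  refine le_min (mul_le_of_le_one_left hx0.le hρ1) ?_
  rw [mul_comm]
  exact mul_le_mul_of_nonneg_right hxm hρ0

theorem min_le_max_add_mul_min {m p t x : ℝ} (ht : t ≤ 1) :
    min (p + t * (m - p)) (m - (1 - t) * (m - p)) ≤ max p (m - x) + t * min x (m - p) := by
  rcases le_total x (m - p) with h | h
  · rw [min_eq_left h]
    have : (1 - t) * x ≤ (1 - t) * (m - p) := mul_le_mul_of_nonneg_left h (by linarith)
    calc _ ≤ m - (1 - t) * (m - p) := min_le_right _ _
      _ ≤ m - x + t * x := by linarith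
      _ ≤ _ := by gcongr; exact le_max_right _ _
  · rw [min_eq_right h]
    calc _ ≤ p + t * (m - p) := min_le_left _ _
      _ ≤ _ := by gcongr; exact le_max_left _ _

section BallQueyranne

variable {m t : ℝ}

theorem sub_protectionLevel_eq (ht : 2 - t ≠ 0) : m - m * (1 - t) / (2 - t) = m / (2 - t) := by
  field_simp
  ring

theorem protectionLevel_add_mul_eq (ht : 2 - t ≠ 0) :
    m * (1 - t) / (2 - t) + t * (m / (2 - t)) = m / (2 - t) := by
  field_simp
  ring

theorem sub_mul_sub_protectionLevel_eq (ht : 2 - t ≠ 0) :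
    m - (1 - t) * (m / (2 - t)) = m / (2 - t) := by
  field_simp
  ring

end BallQueyranne

theorem stmt_9 (m rh rl x : ℝ) (hm : 0 < m) (hrl : 0 < rl) (hlh : rl < rh)
    (hx0 : 0 < x) (hxm : x ≤ m) :
    min x (m - m * (1 - rl / rh) / (2 - rl / rh)) / x ≥ 1 / (2 - rl / rh) ∧
    (max (m * (1 - rl / rh) / (2 - rl / rh)) (m - x) * rh +
        min x (m - m * (1 - rl / rh) / (2 - rl / rh)) * rl) / (m * rh) ≥
      1 / (2 - rl / rh) := by
  have hrh : 0 < rh := hrl.trans hlh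
  have hrl_eq : rl = rl / rh * rh := (div_mul_cancel₀ rl hrh.ne').symm
  set t := rl / rh
  have ht1 : t < 1 := (div_lt_one hrh).2 hlh
  have h2 : 0 < 2 - t := by linarith
  rw [sub_protectionLevel_eq h2.ne']
  constructor
  · rw [div_eq_mul_one_div m]
    exact le_min_div_self hx0 hxm (by positivity) ((div_le_one h2).2 (by linarith))
  · have key := min_le_max_add_mul_min (m := m) (p := m * (1 - t) / (2 - t)) (x := x) ht1.le
    rw [sub_protectionLevel_eq h2.ne', protectionLevel_add_mul_eq h2.ne',
      sub_mul_sub_protectionLevel_eq h2.ne', min_self] at key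
    rw [ge_iff_le, hrl_eq, ← mul_assoc, ← add_mul, mul_div_mul_right _ _ hrh.ne', le_div_iff₀ hm,
      one_div_mul_eq_div, mul_comm (min _ _) t]
    exact key
end

section
/- Let m > 0, 0 < r_ℓ < r_h, and R ∈ (r_ℓ/r_h, 1]. Define g(R) = m·(R - r_ℓ/r_h)/(1 - r_ℓ/r_h). For any x ∈ [0, m] and protection level p with g(R) ≤ p ≤ m, one has CP_u(p;(x,m)) ≥ R, where CP_u(p;(x,m)) = (max{p, m-x}·r_h + min{x, m-p}·r_ℓ)/(m·r_h). -/
/-!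
Over the demand `x`, the numerator of `CP_u(p;(x,m))` is smallest at `x = m - p`, where it equals
`p r_h + (m - p) r_ℓ`. Clearing denominators, the guardrail condition `g(R) ≤ p` says exactly that
this worst case is at least `R m r_h`.
-/

lemma mul_add_sub_mul_le_max_mul_add_min_mul {m rh rl x p : ℝ} (hrh : 0 ≤ rh) (hlh : rl ≤ rh) :
    p * rh + (m - p) * rl ≤ max p (m - x) * rh + min x (m - p) * rl := by
  rcases le_total x (m - p) with h | h
  · rw [min_eq_left h, max_eq_right (by linarith)]
    nlinarith
  · rw [min_eq_right h]
    nlinarith [mul_le_mul_of_nonneg_right (le_max_left p (m - x)) hrh]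

lemma mul_le_mul_add_sub_mul_of_guardrail_le {m rh rl R p : ℝ} (hrh : 0 < rh) (hlh : rl < rh)
    (hpl : m * (R - rl / rh) / (1 - rl / rh) ≤ p) :
    R * (m * rh) ≤ p * rh + (m - p) * rl := by
  have hguard : m * (R - rl / rh) / (1 - rl / rh) = m * (R * rh - rl) / (rh - rl) := by
    field_simp
  rw [hguard, div_le_iff₀ (sub_pos.mpr hlh)] at hpl
  linarith

theorem stmt_11_general (m rh rl R x p : ℝ) (hm : 0 < m) (hrl : 0 < rl) (hlh : rl < rh)
    (hpl : m * (R - rl / rh) / (1 - rl / rh) ≤ p) :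
    (max p (m - x) * rh + min x (m - p) * rl) / (m * rh) ≥ R := by
  have hrh : 0 < rh := hrl.trans hlh
  rw [ge_iff_le, le_div_iff₀ (by positivity)]
  exact (mul_le_mul_add_sub_mul_of_guardrail_le hrh hlh hpl).trans
    (mul_add_sub_mul_le_max_mul_add_min_mul hrh.le hlh.le)

theorem stmt_11 (m rh rl R x p : ℝ) (hm : 0 < m) (hrl : 0 < rl) (hlh : rl < rh)
    (hR0 : rl / rh < R) (hR1 : R ≤ 1) (hx0 : 0 ≤ x) (hxm : x ≤ m)
    (hpl : m * (R - rl / rh) / (1 - rl / rh) ≤ p) (hpm : p ≤ m) :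
    (max p (m - x) * rh + min x (m - p) * rl) / (m * rh) ≥ R :=
  stmt_11_general m rh rl R x p hm hrl hlh hpl
end
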